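/- Let F : ℝⁿ → ℝᵐ be continuously differentiable and X ⊆ ℝⁿ a smooth manifold around x̄ ∈ X. Then the projectional coderivative of F relative to X at x̄ admits the fixed-point expression D*_X F(x̄)(y) = { proj_{T_X(x̄)}(∇F(x̄)* y) } for every y ∈ ℝᵐ. -/

import Mathlib

open Filter Topology Set Metric
open scoped ENNReal NNReal

noncomputable section

/-- Euclidean space ℝⁿ. -/
abbrev Euc (n : ℕ) := EuclideanSpace ℝ (Fin n)

variable {E F : Type*}

/-- Set-valued metric (nearest-point) projection onto `C`. -/
def projSet [NormedAddCommGroup E] (C : Set E) (v : E) : Set E :=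
  {y | y ∈ C ∧ ‖v - y‖ = Metric.infDist v C}

/-- Bouligand (contingent) tangent cone to `C` at `x`. -/
def tanCone [NormedAddCommGroup E] [NormedSpace ℝ E] (C : Set E) (x : E) : Set E :=
  {w | ∃ t : ℕ → ℝ, ∃ w' : ℕ → E, (∀ k, 0 < t k) ∧ Tendsto t atTop (𝓝 0) ∧
      Tendsto w' atTop (𝓝 w) ∧ ∀ k, x + t k • w' k ∈ C}

section Normals
variable [NormedAddCommGroup E] [InnerProductSpace ℝ E]
  [NormedAddCommGroup F] [InnerProductSpace ℝ F]

/-- Fréchet (regular) normal cone to `C` at `x`. -/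
def fNormal (C : Set E) (x : E) : Set E :=
  {v | x ∈ C ∧ ∀ ε > 0, ∃ δ > 0, ∀ y ∈ C, ‖y - x‖ < δ → (inner ℝ v (y - x) : ℝ) ≤ ε * ‖y - x‖}

/-- Limiting (Mordukhovich) normal cone to `C` at `x`. -/
def lNormal (C : Set E) (x : E) : Set E :=
  {v | x ∈ C ∧ ∃ xk vk : ℕ → E, (∀ k, vk k ∈ fNormal C (xk k)) ∧
      Tendsto xk atTop (𝓝 x) ∧ Tendsto vk atTop (𝓝 v)}

/-- Fréchet normal cone to a subset of a product space (componentwise inner product). -/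
def fNormal2 (D : Set (E × F)) (z : E × F) : Set (E × F) :=
  {v | z ∈ D ∧ ∀ ε > 0, ∃ δ > 0, ∀ z' ∈ D, ‖z' - z‖ < δ →
      (inner ℝ v.1 (z'.1 - z.1) : ℝ) + (inner ℝ v.2 (z'.2 - z.2) : ℝ) ≤ ε * ‖z' - z‖}

/-- Limiting normal cone to a subset of a product space. -/
def lNormal2 (D : Set (E × F)) (z : E × F) : Set (E × F) :=
  {v | z ∈ D ∧ ∃ zk vk : ℕ → E × F, (∀ k, vk k ∈ fNormal2 D (zk k)) ∧
      Tendsto zk atTop (𝓝 z) ∧ Tendsto vk atTop (𝓝 v)}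

/-- Graph of a set-valued mapping. -/
def gph (S : E → Set F) : Set (E × F) := {z | z.2 ∈ S z.1}

/-- Restriction of a set-valued mapping to a set `X`. -/
def restr (S : E → Set F) (X : Set E) : E → Set F := fun x => {u | u ∈ S x ∧ x ∈ X}

/-- Fréchet coderivative of `S` at `x` for `u`. -/
def fCoderiv (S : E → Set F) (x : E) (u : F) (u' : F) : Set E :=
  {x' | (x', -u') ∈ fNormal2 (gph S) (x, u)}

/-- Limiting coderivative of `S` at `x` for `u`. -/
def coderiv (S : E → Set F) (x : E) (u : F) (u' : F) : Set E :=
  {x' | (x', -u') ∈ lNormal2 (gph S) (x, u)}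

/-- Projection of the limiting normal cone of `gph (restr S X)` at `z`
onto `T_X(z.1) × F` (projection acting on the first component only). -/
def projNormal (S : E → Set F) (X : Set E) (z : E × F) : Set (E × F) :=
  {q | ∃ v : E, (v, q.2) ∈ lNormal2 (gph (restr S X)) z ∧ q.1 ∈ projSet (tanCone X z.1) v}

/-- Projectional coderivative of `S` relative to `X` at `x` for `u`:
the outer limit of the projected normal cones along `gph (restr S X)`. -/
def projCoderiv (S : E → Set F) (X : Set E) (x : E) (u : F) (u' : F) : Set E :=
  {t | ∃ zk qk : ℕ → E × F,
      (∀ k, zk k ∈ gph (restr S X)) ∧ (∀ k, qk k ∈ projNormal S X (zk k)) ∧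
      Tendsto zk atTop (𝓝 (x, u)) ∧ Tendsto qk atTop (𝓝 (t, -u'))}

/-- `C` is locally closed at `z`. -/
def LocallyClosedAt (C : Set E) (z : E) : Prop :=
  ∃ ε > 0, IsClosed (C ∩ Metric.closedBall z ε)

/-- `S` has the Lipschitz-like (Aubin) property relative to `X` at `xb` for `ub`
with constant `κ`. -/
def LipschitzLikeRel (S : E → Set F) (X : Set E) (xb : E) (ub : F) (κ : ℝ) : Prop :=
  LocallyClosedAt (gph S) (xb, ub) ∧
  ∃ V ∈ 𝓝 xb, ∃ W ∈ 𝓝 ub, ∀ x ∈ X ∩ V, ∀ x' ∈ X ∩ V, ∀ u ∈ S x' ∩ W,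
    ∃ u'' ∈ S x, ‖u - u''‖ ≤ κ * ‖x' - x‖

end Normals

/-- `X ⊆ ℝⁿ` is a smooth manifold around `x₀`, witnessed by the chart data
`(O, Φ, Φ')`: `O` open containing `x₀`, `X ∩ O = Φ⁻¹(0)`, `Φ` is `C¹` on `O`
with derivative `Φ'`, and `Φ'(x₀)` is surjective (full rank). -/
def IsSmoothMfdChart {n c : ℕ} (X : Set (Euc n)) (x₀ : Euc n) (O : Set (Euc n))
    (Φ : Euc n → Euc c) (Φ' : Euc n → (Euc n →L[ℝ] Euc c)) : Prop :=
  IsOpen O ∧ x₀ ∈ O ∧ X ∩ O = {x | x ∈ O ∧ Φ x = 0} ∧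
  (∀ x ∈ O, HasFDerivAt Φ (Φ' x) x) ∧ ContinuousOn Φ' O ∧
  Function.Surjective (Φ' x₀)

/-- `X ⊆ ℝⁿ` is a smooth manifold around `x₀`. -/
def SmoothManifoldAround {n : ℕ} (X : Set (Euc n)) (x₀ : Euc n) : Prop :=
  ∃ (c : ℕ) (O : Set (Euc n)) (Φ : Euc n → Euc c) (Φ' : Euc n → (Euc n →L[ℝ] Euc c)),
    IsSmoothMfdChart X x₀ O Φ Φ'

/-!
Near `xb` the manifold is a regular level set `X ∩ O = Φ⁻¹(0)`. At every point `x ∈ X` where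
`Φ'(x)` is onto, the implicit function theorem identifies the tangent cone with `ker Φ'(x)`, and
the nearest-point projection onto it is the operator `P(x) = I - Φ'(x)* (Φ'(x) Φ'(x)*)⁻¹ Φ'(x)`,
which depends continuously on `x`. A Fréchet normal `(v, u)` to the graph of `f` on `X` at
`(x, f x)` is polar to the tangent vectors `(w, ∇f(x) w)`, `w ∈ ker Φ'(x)`, and since that kernel
is a subspace this means `P(x) (v + ∇f(x)* u) = 0`; by continuity of `P` and `∇f` the same holds
for limiting normals. Hence every projected normal at a point near `xb` has the form
`(P(x) ∇f(x)* (-u), u)`, and its outer limit at `xb` is `{P(xb) ∇f(xb)* y}`, attained by the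
constant sequence built from the normal `(∇f(xb)* y, -y)`.
-/

open ContinuousLinearMap

section Slope
variable [NormedAddCommGroup E] [NormedSpace ℝ E] [NormedAddCommGroup F] [NormedSpace ℝ F]

theorem Filter.Tendsto.clm_apply {α : Type*} {l : Filter α} {M : α → E →L[ℝ] F} {a : α → E}
    {M₀ : E →L[ℝ] F} {a₀ : E} (hM : Tendsto M l (𝓝 M₀)) (ha : Tendsto a l (𝓝 a₀)) :
    Tendsto (fun i => M i (a i)) l (𝓝 (M₀ a₀)) :=
  (isBoundedBilinearMap_apply.continuous.tendsto (M₀, a₀)).comp (hM.prodMk_nhds ha)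

theorem HasFDerivAt.tendsto_inv_smul_sub_of_tendsto {g : E → F} {A : E →L[ℝ] F} {x : E}
    (hg : HasFDerivAt g A x) {t : ℕ → ℝ} {w' : ℕ → E} {w : E}
    (ht0 : ∀ k, 0 < t k) (ht : Tendsto t atTop (𝓝 0)) (hw : Tendsto w' atTop (𝓝 w)) :
    Tendsto (fun k => (t k)⁻¹ • (g (x + t k • w' k) - g x)) atTop (𝓝 (A w)) := by
  refine hg.hasFDerivWithinAt.lim (s := univ) (by simpa using ht.smul hw)
    (Eventually.of_forall fun _ => mem_univ _) (hw.congr fun k => ?_)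
  rw [smul_smul, inv_mul_cancel₀ (ht0 k).ne', one_smul]

end Slope

section TangentCone
variable [NormedAddCommGroup E] [NormedSpace ℝ E]

theorem tendsto_const_add_smul {t : ℕ → ℝ} {w' : ℕ → E} {x w : E}
    (ht : Tendsto t atTop (𝓝 0)) (hw : Tendsto w' atTop (𝓝 w)) :
    Tendsto (fun k => x + t k • w' k) atTop (𝓝 x) := by
  simpa using tendsto_const_nhds.add (ht.smul hw)

theorem mem_tanCone_of_hasDerivAt {C : Set E} {γ : ℝ → E} {w : E} (hγ : HasDerivAt γ w 0)
    (hC : ∀ᶠ s in 𝓝[>] 0, γ s ∈ C) : w ∈ tanCone C (γ 0) := by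
  set S := {s : ℝ | 0 < s ∧ γ s ∈ C}
  have hS : (𝓝[S] (0 : ℝ)).NeBot :=
    neBot_of_le (nhdsWithin_le_of_mem (hC.and self_mem_nhdsWithin |>.mono fun _ h => ⟨h.2, h.1⟩))
  obtain ⟨t, htS, ht⟩ := mem_closure_iff_seq_limit.mp (mem_closure_iff_nhdsWithin_neBot.mpr hS)
  have ht' : Tendsto t atTop (𝓝[>] 0) :=
    tendsto_nhdsWithin_iff.mpr ⟨ht, Eventually.of_forall fun k => (htS k).1⟩
  refine ⟨t, fun k => (t k)⁻¹ • (γ (t k) - γ 0), fun k => (htS k).1, ht, ?_, fun k => ?_⟩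
  · simpa [Function.comp_def] using hγ.tendsto_slope_zero_right.comp ht'
  · rw [smul_inv_smul₀ (htS k).1.ne', add_sub_cancel]
    exact (htS k).2

variable [NormedAddCommGroup F] [NormedSpace ℝ F]

theorem apply_eq_zero_of_mem_tanCone {C : Set E} {Φ : E → F} {T : E →L[ℝ] F} {x w : E}
    (hΦ : HasFDerivAt Φ T x) (hC : ∀ᶠ y in 𝓝 x, y ∈ C → Φ y = Φ x) (hw : w ∈ tanCone C x) :
    T w = 0 := by
  obtain ⟨t, w', ht0, ht, hw', hmem⟩ := hw
  have hslope := hΦ.tendsto_inv_smul_sub_of_tendsto ht0 ht hw'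
  have hzero : ∀ᶠ k in atTop, (t k)⁻¹ • (Φ (x + t k • w' k) - Φ x) = 0 :=
    (tendsto_const_add_smul ht hw').eventually hC |>.mono fun k hk => by
      rw [hk (hmem k), sub_self, smul_zero]
  exact tendsto_nhds_unique hslope (tendsto_const_nhds.congr' (hzero.mono fun _ h => h.symm))

theorem mem_tanCone_of_apply_eq_zero [CompleteSpace E] [FiniteDimensional ℝ F] {C : Set E}
    {Φ : E → F} {T : E →L[ℝ] F} {x w : E} (hΦ : HasStrictFDerivAt Φ T x)
    (hT : Function.Surjective T) (hC : ∀ᶠ y in 𝓝 x, Φ y = Φ x → y ∈ C) (hw : T w = 0) :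
    w ∈ tanCone C x := by
  have hrange : T.range = ⊤ := LinearMap.range_eq_top.mpr hT
  set ψ := hΦ.implicitFunction Φ T hrange
  let w₀ : T.ker := ⟨w, hw⟩
  set γ : ℝ → E := fun s => ψ (Φ x) (s • w₀)
  have hγ : HasDerivAt γ w 0 := by
    have hline : HasDerivAt (fun s : ℝ => s • w₀) w₀ 0 := by
      simpa using (hasDerivAt_id (0 : ℝ)).smul_const w₀
    exact (hΦ.to_implicitFunction hrange).hasFDerivAt.comp_hasDerivAt_of_eq 0 hline (by simp)
  have hγ0 : γ 0 = x := by simp [γ, ψ]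
  have hlevel : ∀ᶠ s in 𝓝 (0 : ℝ), Φ (γ s) = Φ x :=
    ((continuous_const.prodMk (continuous_id.smul continuous_const)).tendsto' (0 : ℝ)
      (Φ x, (0 : T.ker)) (by simp)).eventually (hΦ.map_implicitFunction_eq hrange)
  have hnear : Tendsto γ (𝓝 0) (𝓝 x) := hγ0 ▸ hγ.continuousAt.tendsto
  have hγC : ∀ᶠ s in 𝓝 (0 : ℝ), γ s ∈ C :=
    (hlevel.and (hnear.eventually hC)).mono fun _ h => h.2 h.1
  rw [← hγ0]
  exact mem_tanCone_of_hasDerivAt hγ (hγC.filter_mono nhdsWithin_le_nhds)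

theorem tanCone_eq_ker [CompleteSpace E] [FiniteDimensional ℝ F] {C : Set E} {Φ : E → F}
    {T : E →L[ℝ] F} {x : E} (hΦ : HasStrictFDerivAt Φ T x) (hT : Function.Surjective T)
    (hC : ∀ᶠ y in 𝓝 x, y ∈ C ↔ Φ y = Φ x) :
    tanCone C x = {w | T w = 0} :=
  Set.ext fun _ => ⟨apply_eq_zero_of_mem_tanCone hΦ.hasFDerivAt (hC.mono fun _ h => h.1),
    mem_tanCone_of_apply_eq_zero hΦ hT (hC.mono fun _ h => h.2)⟩

end TangentCone

section Normals
variable [NormedAddCommGroup E] [InnerProductSpace ℝ E]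
  [NormedAddCommGroup F] [InnerProductSpace ℝ F]

theorem mem_lNormal2_of_mem_fNormal2 {D : Set (E × F)} {z v : E × F} (hv : v ∈ fNormal2 D z) :
    v ∈ lNormal2 D z :=
  ⟨hv.1, fun _ => z, fun _ => v, fun _ => hv, tendsto_const_nhds, tendsto_const_nhds⟩

theorem inner_add_inner_nonpos_of_mem_fNormal2 {D : Set (E × F)} {z v d : E × F}
    (hv : v ∈ fNormal2 D z) (hd : d ∈ tanCone D z) :
    inner ℝ v.1 d.1 + inner ℝ v.2 d.2 ≤ 0 := by
  obtain ⟨t, d', ht0, ht, hd', hmem⟩ := hd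
  have hcont : Continuous fun e : E × F => inner ℝ v.1 e.1 + inner ℝ v.2 e.2 := by fun_prop
  have hbound : ∀ ε > 0, inner ℝ v.1 d.1 + inner ℝ v.2 d.2 ≤ ε * ‖d‖ := by
    intro ε hε
    obtain ⟨δ, hδ, hineq⟩ := hv.2 ε hε
    have hsmall : Tendsto (fun k => ‖t k • d' k‖) atTop (𝓝 0) := by
      simpa using (ht.smul hd').norm
    have hnear : ∀ᶠ k in atTop, ‖t k • d' k‖ < δ := hsmall.eventually (gt_mem_nhds hδ)
    refine le_of_tendsto_of_tendsto ((hcont.tendsto d).comp hd') (hd'.norm.const_mul ε)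
      (hnear.mono fun k hk => ?_)
    have h := hineq _ (hmem k) (by simpa using hk)
    simp only [Prod.fst_add, Prod.snd_add, add_sub_cancel_left, Prod.smul_fst, Prod.smul_snd,
      real_inner_smul_right, norm_smul, Real.norm_of_nonneg (ht0 k).le] at h
    simp only [Function.comp_apply]
    nlinarith [ht0 k]
  have hlim : Tendsto (fun ε : ℝ => ε * ‖d‖) (𝓝[>] 0) (𝓝 0) :=
    ((continuous_id.mul continuous_const).tendsto' 0 0 (zero_mul _)).mono_left nhdsWithin_le_nhds
  exact ge_of_tendsto hlim (eventually_nhdsWithin_of_forall hbound)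

theorem mk_mem_tanCone_gph_restr {X : Set E} {f : E → F} {A : E →L[ℝ] F} {x w : E}
    (hf : HasFDerivAt f A x) (hw : w ∈ tanCone X x) :
    (w, A w) ∈ tanCone (gph (restr (fun x => {f x}) X)) (x, f x) := by
  obtain ⟨t, w', ht0, ht, hw', hmem⟩ := hw
  refine ⟨t, fun k => (w' k, (t k)⁻¹ • (f (x + t k • w' k) - f x)), ht0, ht,
    hw'.prodMk_nhds (hf.tendsto_inv_smul_sub_of_tendsto ht0 ht hw'), fun k => ?_⟩
  simp [gph, restr, smul_inv_smul₀ (ht0 k).ne', hmem k]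

end Normals

section Graph
variable [NormedAddCommGroup E] [InnerProductSpace ℝ E] [CompleteSpace E]
  [NormedAddCommGroup F] [InnerProductSpace ℝ F] [CompleteSpace F]
  {X : Set E} {f : E → F} {A : E →L[ℝ] F} {x : E}

theorem inner_add_adjoint_nonpos_of_mem_fNormal2 (hf : HasFDerivAt f A x) {v w : E} {u : F}
    (h : (v, u) ∈ fNormal2 (gph (restr (fun x => {f x}) X)) (x, f x)) (hw : w ∈ tanCone X x) :
    inner ℝ (v + adjoint A u) w ≤ 0 := by
  rw [inner_add_left, adjoint_inner_left]
  exact inner_add_inner_nonpos_of_mem_fNormal2 h (mk_mem_tanCone_gph_restr hf hw)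

theorem adjoint_neg_mem_fNormal2 (hf : HasFDerivAt f A x) (hx : x ∈ X) (y : F) :
    (adjoint A y, -y) ∈ fNormal2 (gph (restr (fun x => {f x}) X)) (x, f x) := by
  refine ⟨⟨rfl, hx⟩, fun ε hε => ?_⟩
  obtain ⟨δ, hδ, hsmall⟩ := Metric.eventually_nhds_iff.mp
    (hf.isLittleO.def (c := ε / (‖y‖ + 1)) (by positivity))
  refine ⟨δ, hδ, fun ⟨x', u'⟩ ⟨hu', _⟩ hnear => ?_⟩
  dsimp only at hu' ⊢
  subst hu'
  have hx' : ‖x' - x‖ ≤ ‖(x', f x') - (x, f x)‖ := norm_fst_le ((x', f x') - (x, f x))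
  have hrem := hsmall (lt_of_le_of_lt (by rwa [dist_eq_norm]) hnear)
  have hy : ‖y‖ * (ε / (‖y‖ + 1)) ≤ ε := by
    rw [mul_div_assoc', div_le_iff₀ (by positivity)]
    nlinarith [norm_nonneg y]
  calc inner ℝ (adjoint A y) (x' - x) + inner ℝ (-y) (f x' - f x)
      = -inner ℝ y (f x' - f x - A (x' - x)) := by
        rw [adjoint_inner_left, inner_neg_left]; simp only [inner_sub_right]; ring
    _ ≤ ‖y‖ * ‖f x' - f x - A (x' - x)‖ := (neg_le_abs _).trans (abs_real_inner_le_norm _ _)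
    _ ≤ ‖y‖ * (ε / (‖y‖ + 1) * ‖x' - x‖) := by gcongr
    _ ≤ ε * ‖(x', f x') - (x, f x)‖ := by
        rw [← mul_assoc]; gcongr

end Graph

section KerProj
variable [NormedAddCommGroup E] [InnerProductSpace ℝ E]

theorem projSet_eq_singleton {K : Set E} {v p : E} (hp : p ∈ K)
    (hperp : ∀ y ∈ K, inner ℝ (v - p) (y - p) = 0) : projSet K v = {p} := by
  have hpyth : ∀ y ∈ K, ‖v - y‖ ^ 2 = ‖v - p‖ ^ 2 + ‖p - y‖ ^ 2 := by
    intro y hy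
    rw [← sub_add_sub_cancel v p y, norm_add_sq_real, ← neg_sub y p, inner_neg_right,
      hperp y hy]
    ring
  have hmin : ∀ y ∈ K, ‖v - p‖ ≤ ‖v - y‖ := fun y hy => by
    nlinarith [hpyth y hy, norm_nonneg (v - y), norm_nonneg (v - p), norm_nonneg (p - y)]
  have hdist : infDist v K = ‖v - p‖ := by
    refine le_antisymm (by simpa [dist_eq_norm] using infDist_le_dist_of_mem hp) ?_
    exact (le_infDist ⟨p, hp⟩).mpr fun y hy => by simpa [dist_eq_norm] using hmin y hy
  ext q
  simp only [projSet, mem_ofPred_eq, mem_singleton_iff, hdist]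
  refine ⟨fun ⟨hq, hnorm⟩ => ?_, by rintro rfl; exact ⟨hp, rfl⟩⟩
  have h := hpyth q hq
  rw [hnorm] at h
  have : ‖p - q‖ = 0 := by nlinarith [norm_nonneg (p - q)]
  exact (sub_eq_zero.mp (norm_eq_zero.mp this)).symm

variable [CompleteSpace E] [NormedAddCommGroup F] [InnerProductSpace ℝ F] [CompleteSpace F]

/-- The orthogonal projection onto `ker T`, written as `v ↦ v - T† (T T†)⁻¹ T v` so that its
continuous dependence on `T` is visible. -/
def kerProj (T : E →L[ℝ] F) : E →L[ℝ] E :=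
  ContinuousLinearMap.id ℝ E - adjoint T ∘L Ring.inverse (T ∘L adjoint T) ∘L T

variable {T : E →L[ℝ] F}

theorem apply_adjoint_ringInverse (hT : IsUnit (T ∘L adjoint T)) (z : F) :
    T (adjoint T (Ring.inverse (T ∘L adjoint T) z)) = z := by
  change (T ∘L adjoint T * Ring.inverse (T ∘L adjoint T)) z = z
  rw [Ring.mul_inverse_cancel _ hT]
  rfl

theorem isUnit_comp_adjoint_iff [FiniteDimensional ℝ F] :
    IsUnit (T ∘L adjoint T) ↔ Function.Surjective T := by
  refine ⟨fun hT z => ⟨_, apply_adjoint_ringInverse hT z⟩, fun hT => ?_⟩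
  have hinj : Function.Injective (T ∘L adjoint T) := by
    refine (injective_iff_map_eq_zero _).mpr fun u hu => ?_
    have hadj : adjoint T u = 0 := by
      rw [← inner_self_eq_zero (𝕜 := ℝ), adjoint_inner_left]
      exact (congrArg (inner ℝ u) hu).trans (inner_zero_right u)
    obtain ⟨w, rfl⟩ := hT u
    rw [← inner_self_eq_zero (𝕜 := ℝ), ← adjoint_inner_left, hadj, inner_zero_left]
  exact isUnit_iff_bijective.mpr ⟨hinj, LinearMap.injective_iff_surjective.mp hinj⟩

theorem apply_kerProj (hT : IsUnit (T ∘L adjoint T)) (v : E) : T (kerProj T v) = 0 := by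
  simp [kerProj, apply_adjoint_ringInverse hT]

theorem inner_sub_kerProj_eq_zero (v : E) {w : E} (hw : T w = 0) :
    inner ℝ (v - kerProj T v) w = 0 := by
  simp [kerProj, adjoint_inner_left, hw]

theorem kerProj_eq_zero_iff (hT : IsUnit (T ∘L adjoint T)) {v : E} :
    kerProj T v = 0 ↔ ∀ w, T w = 0 → inner ℝ v w = 0 := by
  constructor
  · intro h w hw
    simpa [h] using inner_sub_kerProj_eq_zero v hw
  · intro h
    have hP := apply_kerProj hT v
    have h' := inner_sub_kerProj_eq_zero v hP
    rw [inner_sub_left, h _ hP, zero_sub, neg_eq_zero] at h'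
    exact inner_self_eq_zero.mp h'

theorem projSet_ker (hT : IsUnit (T ∘L adjoint T)) (v : E) :
    projSet {w | T w = 0} v = {kerProj T v} :=
  projSet_eq_singleton (apply_kerProj hT v) fun y hy =>
    inner_sub_kerProj_eq_zero v (by rw [map_sub, hy, apply_kerProj hT v, sub_zero])

theorem ContinuousOn.adjoint {α : Type*} [TopologicalSpace α] {g : α → E →L[ℝ] F}
    {s : Set α} (hg : ContinuousOn g s) : ContinuousOn (fun a => adjoint (g a)) s :=
  (ContinuousLinearMap.adjoint : (E →L[ℝ] F) ≃ₗᵢ⋆[ℝ] (F →L[ℝ] E)).continuous.comp_continuousOn hg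

theorem continuousOn_kerProj {α : Type*} [TopologicalSpace α] {g : α → E →L[ℝ] F} {s : Set α}
    (hg : ContinuousOn g s) (hs : ∀ a ∈ s, IsUnit (g a ∘L adjoint (g a))) :
    ContinuousOn (fun a => kerProj (g a)) s := by
  have hadj : ContinuousOn (fun a => adjoint (g a)) s := hg.adjoint
  have hinv : ContinuousOn (fun a => Ring.inverse (g a ∘L adjoint (g a))) s := fun a ha => by
    obtain ⟨u, hu⟩ := hs a ha
    have hinv_at : ContinuousAt Ring.inverse (g a ∘L adjoint (g a)) :=
      hu ▸ NormedRing.inverse_continuousAt u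
    exact hinv_at.comp_continuousWithinAt (f := fun a => g a ∘L adjoint (g a))
      (hg.clm_comp hadj a ha)
  exact continuousOn_const.sub (hadj.clm_comp (hinv.clm_comp hg))

end KerProj

theorem ContDiff.continuous_adjoint_fderiv [NormedAddCommGroup E] [InnerProductSpace ℝ E]
    [CompleteSpace E] [NormedAddCommGroup F] [InnerProductSpace ℝ F] [CompleteSpace F]
    {f : E → F} (hf : ContDiff ℝ 1 f) : Continuous fun x => adjoint (fderiv ℝ f x) :=
  (adjoint : (E →L[ℝ] F) ≃ₗᵢ⋆[ℝ] (F →L[ℝ] E)).continuous.comp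
    (hf.continuous_fderiv one_ne_zero)

structure IsLevelSetChart [NormedAddCommGroup E] [NormedSpace ℝ E] [NormedAddCommGroup F]
    [NormedSpace ℝ F] (X O : Set E) (Φ : E → F) (Φ' : E → E →L[ℝ] F) : Prop where
  isOpen : IsOpen O
  inter_eq : X ∩ O = {x | x ∈ O ∧ Φ x = 0}
  hasFDerivAt : ∀ x ∈ O, HasFDerivAt Φ (Φ' x) x
  continuousOn : ContinuousOn Φ' O

def regularPoints [NormedAddCommGroup E] [NormedSpace ℝ E] [NormedAddCommGroup F]
    [NormedSpace ℝ F] (O : Set E) (Φ' : E → E →L[ℝ] F) : Set E :=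
  {x | x ∈ O ∧ Function.Surjective (Φ' x)}

namespace IsLevelSetChart

variable {G : Type*} [NormedAddCommGroup E] [InnerProductSpace ℝ E] [CompleteSpace E]
  [NormedAddCommGroup F] [InnerProductSpace ℝ F] [FiniteDimensional ℝ F]
  [NormedAddCommGroup G] [InnerProductSpace ℝ G] [CompleteSpace G]
  {X O : Set E} {Φ : E → F} {Φ' : E → E →L[ℝ] F} {f : E → G} {x : E}

theorem isOpen_regularPoints (hΦ : IsLevelSetChart X O Φ Φ') : IsOpen (regularPoints O Φ') := by
  have hgram : ContinuousOn (fun x => Φ' x ∘L adjoint (Φ' x)) O :=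
    hΦ.continuousOn.clm_comp hΦ.continuousOn.adjoint
  convert hgram.isOpen_inter_preimage hΦ.isOpen Units.isOpen using 1
  exact Set.ext fun x => and_congr_right fun _ => isUnit_comp_adjoint_iff.symm

theorem continuousOn_kerProj (hΦ : IsLevelSetChart X O Φ Φ') :
    ContinuousOn (fun x => kerProj (Φ' x)) (regularPoints O Φ') :=
  _root_.continuousOn_kerProj (hΦ.continuousOn.mono fun _ hx => hx.1)
    fun _ hx => isUnit_comp_adjoint_iff.mpr hx.2

theorem tendsto_kerProj (hΦ : IsLevelSetChart X O Φ Φ') {xk : ℕ → E} {ak : ℕ → E} {a : E}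
    (hxk : Tendsto xk atTop (𝓝 x)) (hx : x ∈ regularPoints O Φ') (hak : Tendsto ak atTop (𝓝 a)) :
    Tendsto (fun k => kerProj (Φ' (xk k)) (ak k)) atTop (𝓝 (kerProj (Φ' x) a)) := by
  have hxk' : Tendsto xk atTop (𝓝[regularPoints O Φ'] x) :=
    tendsto_nhdsWithin_iff.mpr ⟨hxk, hxk.eventually (hΦ.isOpen_regularPoints.mem_nhds hx)⟩
  exact ((hΦ.continuousOn_kerProj x hx).tendsto.comp hxk').clm_apply hak

theorem tanCone_eq (hΦ : IsLevelSetChart X O Φ Φ') (hxX : x ∈ X) (hx : x ∈ regularPoints O Φ') :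
    tanCone X x = {w | Φ' x w = 0} := by
  have hO : O ∈ 𝓝 x := hΦ.isOpen.mem_nhds hx.1
  have hΦx : Φ x = 0 := (hΦ.inter_eq ▸ ⟨hxX, hx.1⟩ : x ∈ {x | x ∈ O ∧ Φ x = 0}).2
  have hstrict : HasStrictFDerivAt Φ (Φ' x) x :=
    hasStrictFDerivAt_of_hasFDerivAt_of_continuousAt (mem_of_superset hO hΦ.hasFDerivAt)
      (hΦ.continuousOn.continuousAt hO)
  refine tanCone_eq_ker hstrict hx.2 (mem_of_superset hO fun y hy => ?_)
  have h := congrArg (y ∈ ·) hΦ.inter_eq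
  simp only [mem_inter_iff, mem_ofPred_eq, hy, and_true, true_and, eq_iff_iff] at h
  rw [mem_ofPred_eq, h, hΦx]

theorem projSet_tanCone (hΦ : IsLevelSetChart X O Φ Φ') (hxX : x ∈ X)
    (hx : x ∈ regularPoints O Φ') (v : E) :
    projSet (tanCone X x) v = {kerProj (Φ' x) v} := by
  rw [hΦ.tanCone_eq hxX hx]
  exact projSet_ker (isUnit_comp_adjoint_iff.mpr hx.2) v

theorem kerProj_add_adjoint_eq_zero_of_mem_fNormal2 (hΦ : IsLevelSetChart X O Φ Φ')
    {A : E →L[ℝ] G} (hf : HasFDerivAt f A x) (hx : x ∈ regularPoints O Φ') {v : E} {u : G}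
    (h : (v, u) ∈ fNormal2 (gph (restr (fun x => {f x}) X)) (x, f x)) :
    kerProj (Φ' x) (v + adjoint A u) = 0 := by
  have htan := hΦ.tanCone_eq h.1.2 hx
  refine (kerProj_eq_zero_iff (isUnit_comp_adjoint_iff.mpr hx.2)).mpr fun w hw => ?_
  have hle (w : E) (hw : Φ' x w = 0) : inner ℝ (v + adjoint A u) w ≤ 0 :=
    inner_add_adjoint_nonpos_of_mem_fNormal2 hf h (htan ▸ hw)
  have hge := hle (-w) (by rw [map_neg, hw, neg_zero])
  rw [inner_neg_right, neg_nonpos] at hge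
  exact le_antisymm (hle w hw) hge

theorem kerProj_add_adjoint_eq_zero_of_mem_lNormal2 (hΦ : IsLevelSetChart X O Φ Φ')
    (hf : ContDiff ℝ 1 f) (hx : x ∈ regularPoints O Φ') {v : E} {u : G}
    (h : (v, u) ∈ lNormal2 (gph (restr (fun x => {f x}) X)) (x, f x)) :
    kerProj (Φ' x) (v + adjoint (fderiv ℝ f x) u) = 0 := by
  obtain ⟨-, zk, vk, hvk, hzk, hvlim⟩ := h
  have hxk : Tendsto (fun k => (zk k).1) atTop (𝓝 x) := (continuous_fst.tendsto _).comp hzk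
  have hzero : ∀ᶠ k in atTop,
      kerProj (Φ' (zk k).1) ((vk k).1 + adjoint (fderiv ℝ f (zk k).1) (vk k).2) = 0 := by
    refine (hxk.eventually (hΦ.isOpen_regularPoints.mem_nhds hx)).mono fun k hk => ?_
    have hz : zk k = ((zk k).1, f (zk k).1) := Prod.ext rfl (hvk k).1.1
    exact hΦ.kerProj_add_adjoint_eq_zero_of_mem_fNormal2
      ((hf.differentiable one_ne_zero _).hasFDerivAt) hk (hz ▸ hvk k)
  have hlim := hΦ.tendsto_kerProj hxk hx
    (((continuous_fst.tendsto _).comp hvlim).add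
      (((hf.continuous_adjoint_fderiv.tendsto x).comp hxk).clm_apply
        ((continuous_snd.tendsto _).comp hvlim)))
  exact tendsto_nhds_unique hlim (tendsto_const_nhds.congr' (hzero.mono fun _ h => h.symm))

theorem eq_kerProj_of_mem_projNormal (hΦ : IsLevelSetChart X O Φ Φ') (hf : ContDiff ℝ 1 f)
    {z q : E × G} (hz : z ∈ gph (restr (fun x => {f x}) X)) (hx : z.1 ∈ regularPoints O Φ')
    (hq : q ∈ projNormal (fun x => {f x}) X z) :
    q.1 = kerProj (Φ' z.1) (adjoint (fderiv ℝ f z.1) (-q.2)) := by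
  obtain ⟨v, hv, hproj⟩ := hq
  have hz' : z = (z.1, f z.1) := Prod.ext rfl hz.1
  rw [hΦ.projSet_tanCone hz.2 hx, mem_singleton_iff] at hproj
  have h0 := hΦ.kerProj_add_adjoint_eq_zero_of_mem_lNormal2 hf hx (hz' ▸ hv)
  rw [hproj, map_neg, map_neg, eq_neg_iff_add_eq_zero, ← map_add]
  exact h0

end IsLevelSetChart

/-- Fixed-point expression for the projectional coderivative of
a `C¹` single-valued map relative to a smooth manifold:
`D*_X F(xb)(y) = { proj_{T_X(xb)}(∇F(xb)* y) }`. -/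
theorem stmt9 {n m : ℕ} (X : Set (Euc n)) (xb : Euc n)
    (hX : SmoothManifoldAround X xb) (hxb : xb ∈ X)
    (f : Euc n → Euc m) (hf : ContDiff ℝ 1 f) (y : Euc m) :
    projCoderiv (fun x => {f x}) X xb (f xb) y =
      projSet (tanCone X xb) (ContinuousLinearMap.adjoint (fderiv ℝ f xb) y) := by
  obtain ⟨c, O, Φ, Φ', hO, hxbO, hXO, hder, hcont, hsurj⟩ := hX
  have hΦ : IsLevelSetChart X O Φ Φ' := ⟨hO, hXO, hder, hcont⟩
  have hreg : xb ∈ regularPoints O Φ' := ⟨hxbO, hsurj⟩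
  rw [hΦ.projSet_tanCone hxb hreg]
  ext t
  rw [mem_singleton_iff]
  constructor
  · rintro ⟨zk, qk, hzk, hqk, hz, hq⟩
    have hxk : Tendsto (fun k => (zk k).1) atTop (𝓝 xb) := (continuous_fst.tendsto _).comp hz
    have hu : Tendsto (fun k => -(qk k).2) atTop (𝓝 y) := by
      simpa using ((continuous_snd.tendsto _).comp hq).neg
    have heq : ∀ᶠ k in atTop, kerProj (Φ' (zk k).1)
        (adjoint (fderiv ℝ f (zk k).1) (-(qk k).2)) = (qk k).1 :=
      (hxk.eventually (hΦ.isOpen_regularPoints.mem_nhds hreg)).mono fun k hk =>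
        (hΦ.eq_kerProj_of_mem_projNormal hf (hzk k) hk (hqk k)).symm
    exact tendsto_nhds_unique ((continuous_fst.tendsto _).comp hq)
      ((hΦ.tendsto_kerProj hxk hreg
        (((hf.continuous_adjoint_fderiv.tendsto xb).comp hxk).clm_apply hu)).congr' heq)
  · rintro rfl
    have hnormal := adjoint_neg_mem_fNormal2 (hf.differentiable one_ne_zero xb).hasFDerivAt hxb y
    refine ⟨fun _ => (xb, f xb), fun _ => (_, -y), fun _ => hnormal.1,
      fun _ => ⟨_, mem_lNormal2_of_mem_fNormal2 hnormal, ?_⟩, tendsto_const_nhds,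
      tendsto_const_nhds⟩
    rw [hΦ.projSet_tanCone hxb hreg]
    rfl
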